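/- Let ℓ ≥ 4 and r ≥ 1 be integers, let Δ > 0, and let f_1, …, f_k ∈ [0,1) satisfy d_w(f_j, f_{j'}) ≥ Δ for all j ≠ j'. Let x ∈ [0,1) and suppose min_{1 ≤ j ≤ k} d_w(x, f_j) ≥ 1/ℓ. Then Σ_{j=1}^k K_ℓ(x − f_j)^r ≤ 2 · 4^{−r} + π²/(ℓ^{2r} Δ^{2r}). -/

import Mathlib

/-!
Write `w_j = (x - f_j) - round (x - f_j)`, a representative of `x - f_j` in `[-1/2, 1/2]`.
Summing the geometric series gives `ℓ² K_ℓ(y) sin²(πy) ≤ 1`, and Jordan's inequality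
`|sin(πy)| ≥ 2|y - round y|` turns this into `K_ℓ(x - f_j) ≤ 1 / (2ℓ|w_j|)²`. The `w_j` inherit
`|w_j| ≥ 1/ℓ` and the `Δ`-separation, so on each side of `0` the `n`-th of them is at distance
`≥ 1/ℓ + nΔ`; comparing with `ζ(2) = π²/6` bounds each side by `4^{-r}(1 + (ℓΔ)^{-2r} π²/6)`.
-/

/-- The wrap-around metric on `[0,1)`: `dw f g = min_{t ∈ ℤ} |f - g + t|`. -/
noncomputable def dw (f g : ℝ) : ℝ := ⨅ t : ℤ, |f - g + (t : ℝ)|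

/-- The normalized Fejér kernel of order `ℓ`:
`K_ℓ(x) = (1/ℓ²) |Σ_{j=0}^{ℓ-1} e^{2πijx}|²`. -/
noncomputable def fejer (ℓ : ℕ) (x : ℝ) : ℝ :=
  (1 / (ℓ : ℝ) ^ 2) *
    ‖(∑ j ∈ Finset.range ℓ,
      Complex.exp (2 * Real.pi * Complex.I * (j : ℂ) * (x : ℂ)))‖ ^ 2

open Real Finset

lemma dw_le_abs_add_intCast (f g : ℝ) (t : ℤ) : dw f g ≤ |f - g + t| :=
  ciInf_le ⟨0, by rintro _ ⟨s, rfl⟩; positivity⟩ t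

lemma two_mul_abs_sub_round_le_abs_sin (y : ℝ) : 2 * |y - round y| ≤ |sin (π * y)| := by
  have hw : |π * (y - round y)| ≤ π / 2 := by
    rw [abs_mul, abs_of_pos pi_pos]; nlinarith [abs_sub_round y, pi_pos]
  have hsin : |sin (π * y)| = sin |π * (y - round y)| := by
    rw [← abs_sin_eq_sin_abs_of_abs_le_pi (by linarith [pi_pos]),
      show π * y = π * (y - round y) + round y * π by ring, sin_add_int_mul_pi, abs_mul,
      abs_neg_one_zpow, one_mul]
  rw [hsin, abs_mul, abs_of_pos pi_pos]
  rw [abs_mul, abs_of_pos pi_pos] at hw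
  calc 2 * |y - round y| = 2 / π * (π * |y - round y|) := by field_simp
    _ ≤ sin (π * |y - round y|) := mul_le_sin (by positivity) hw

lemma sq_mul_fejer (ℓ : ℕ) (y : ℝ) :
    (ℓ : ℝ) ^ 2 * fejer ℓ y =
      ‖∑ j ∈ range ℓ, Complex.exp (2 * π * Complex.I * (j : ℂ) * (y : ℂ))‖ ^ 2 := by
  rcases eq_or_ne ℓ 0 with rfl | hℓ
  · simp
  · rw [fejer, ← mul_assoc, mul_one_div_cancel (by positivity), one_mul]

lemma norm_sum_exp_mul_abs_sin_le (ℓ : ℕ) (y : ℝ) :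
    ‖∑ j ∈ range ℓ, Complex.exp (2 * π * Complex.I * (j : ℂ) * (y : ℂ))‖ * |sin (π * y)| ≤ 1 := by
  set z := Complex.exp (Complex.I * ((2 * π * y : ℝ) : ℂ))
  have hpow : ∀ j : ℕ, Complex.exp (2 * π * Complex.I * (j : ℂ) * (y : ℂ)) = z ^ j := fun j => by
    rw [← Complex.exp_nat_mul]; push_cast; ring_nf
  have hz : ‖z‖ = 1 := by rw [Complex.norm_exp_I_mul_ofReal]
  have hz1 : ‖z - 1‖ = 2 * |sin (π * y)| := by
    rw [Complex.norm_exp_I_mul_ofReal_sub_one, norm_mul, Real.norm_eq_abs, Real.norm_eq_abs,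
      abs_two]
    ring_nf
  have hgeom : ‖(∑ j ∈ range ℓ, z ^ j) * (z - 1)‖ ≤ 2 := by
    rw [geom_sum_mul]
    calc ‖z ^ ℓ - 1‖ ≤ ‖z ^ ℓ‖ + ‖(1 : ℂ)‖ := norm_sub_le _ _
      _ = 2 := by rw [norm_pow, hz]; norm_num
  simp only [hpow]
  rw [norm_mul, hz1] at hgeom
  linarith

lemma sq_mul_fejer_le (ℓ : ℕ) (y : ℝ) : (2 * ℓ * |y - round y|) ^ 2 * fejer ℓ y ≤ 1 := by
  have hsin := two_mul_abs_sub_round_le_abs_sin y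
  have hK := norm_sum_exp_mul_abs_sin_le ℓ y
  have hK0 : 0 ≤ fejer ℓ y := by rw [fejer]; positivity
  calc (2 * ℓ * |y - round y|) ^ 2 * fejer ℓ y
      = (2 * |y - round y|) ^ 2 * ((ℓ : ℝ) ^ 2 * fejer ℓ y) := by ring
    _ ≤ |sin (π * y)| ^ 2 * ((ℓ : ℝ) ^ 2 * fejer ℓ y) := by gcongr
    _ = (‖∑ j ∈ range ℓ, Complex.exp (2 * π * Complex.I * (j : ℂ) * (y : ℂ))‖ *
          |sin (π * y)|) ^ 2 := by
        rw [sq_mul_fejer]; ring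
    _ ≤ 1 := pow_le_one₀ (by positivity) hK

lemma fejer_pow_le {ℓ : ℕ} (r : ℕ) {y : ℝ} (hℓ : (0 : ℝ) < ℓ) (hy : 0 < |y - round y|) :
    fejer ℓ y ^ r ≤ (1 / 4) ^ r * ((1 / ℓ) / |y - round y|) ^ (2 * r) := by
  have hK : fejer ℓ y ≤ 1 / 4 * ((1 / ℓ) / |y - round y|) ^ 2 := by
    have := sq_mul_fejer_le ℓ y
    rw [← le_div_iff₀' (by positivity)] at this
    exact this.trans_eq (by field_simp; ring)
  rw [pow_mul, ← mul_pow]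
  exact pow_le_pow_left₀ (by rw [fejer]; positivity) hK r

section Separated

variable {a Δ : ℝ} {p : ℕ}

lemma div_pow_le_of_natCast_mul_le (ha : 0 < a) (hΔ : 0 < Δ) (hp : 2 ≤ p) {s : ℝ} (n : ℕ)
    (hs : a ≤ s) (hn : n * Δ ≤ s - a) :
    (a / s) ^ p ≤ (if n = 0 then 1 else 0) + (a / Δ) ^ p * (1 / (n : ℝ) ^ 2) := by
  have hs0 : 0 < s := ha.trans_le hs
  rcases Nat.eq_zero_or_pos n with rfl | hn0
  · rw [if_pos rfl, Nat.cast_zero, zero_pow two_ne_zero, div_zero, mul_zero, add_zero]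
    exact pow_le_one₀ (by positivity) ((div_le_one hs0).2 hs)
  · have hn1 : (1 : ℝ) ≤ n := by exact_mod_cast hn0
    rw [if_neg hn0.ne', zero_add]
    calc (a / s) ^ p ≤ (a / (n * Δ)) ^ p := by
          gcongr
          linarith
      _ = (a / Δ) ^ p * (1 / (n : ℝ)) ^ p := by rw [← mul_pow]; field_simp
      _ ≤ (a / Δ) ^ p * (1 / (n : ℝ) ^ 2) := by
          rw [← one_div_pow]
          have h1n : 1 / (n : ℝ) ≤ 1 := div_le_one_of_le₀ hn1 (by positivity)
          gcongr ?_ * ?_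
          exact pow_le_pow_of_le_one (by positivity) h1n hp

variable {ι : Type*} (S : Finset ι) (s : ι → ℝ)

/-- Points `≥ a` that are `Δ`-separated: the `n`-th one, counted from the left, is `≥ a + nΔ`, so
the sum is dominated by `1 + (a/Δ)^p ζ(2)`. -/
lemma sum_div_pow_le_of_separated (ha : 0 < a) (hΔ : 0 < Δ) (hp : 2 ≤ p)
    (hs : ∀ j ∈ S, a ≤ s j) (hsep : ∀ i ∈ S, ∀ j ∈ S, i ≠ j → Δ ≤ |s i - s j|) :
    ∑ j ∈ S, (a / s j) ^ p ≤ 1 + (a / Δ) ^ p * (π ^ 2 / 6) := by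
  classical
  set n : ι → ℕ := fun j => ⌊(s j - a) / Δ⌋₊
  have hn_le : ∀ j ∈ S, n j * Δ ≤ s j - a := fun j hj =>
    (le_div_iff₀ hΔ).1 (Nat.floor_le (div_nonneg (sub_nonneg.2 (hs j hj)) hΔ.le))
  have hn_gt : ∀ j, s j - a < (n j + 1) * Δ := fun j =>
    (div_lt_iff₀ hΔ).1 (Nat.lt_floor_add_one _)
  have hinj : Set.InjOn n S := by
    intro i hi j hj hij
    by_contra hne
    have hi₁ := hn_le i hi
    have hi₂ := hn_gt i
    rw [hij] at hi₁ hi₂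
    have hclose : |s i - s j| < Δ := by
      rw [abs_sub_lt_iff]
      constructor <;> linarith [hn_le j hj, hn_gt j]
    exact (hsep i hi j hj hne).not_gt hclose
  set g : ℕ → ℝ := fun m => (if m = 0 then 1 else 0) + (a / Δ) ^ p * (1 / (m : ℝ) ^ 2)
  have hg : HasSum g (1 + (a / Δ) ^ p * (π ^ 2 / 6)) :=
    (hasSum_ite_eq 0 1).add (hasSum_zeta_two.mul_left _)
  calc ∑ j ∈ S, (a / s j) ^ p ≤ ∑ j ∈ S, g (n j) := sum_le_sum fun j hj =>
        div_pow_le_of_natCast_mul_le ha hΔ hp (n j) (hs j hj) (hn_le j hj)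
    _ = ∑ m ∈ S.image n, g m := (sum_image hinj).symm
    _ ≤ 1 + (a / Δ) ^ p * (π ^ 2 / 6) := sum_le_hasSum _ (fun m _ => by positivity) hg

lemma sum_div_abs_pow_le_of_separated (ha : 0 < a) (hΔ : 0 < Δ) (hp : 2 ≤ p)
    (hs : ∀ j ∈ S, a ≤ |s j|) (hsep : ∀ i ∈ S, ∀ j ∈ S, i ≠ j → Δ ≤ |s i - s j|) :
    ∑ j ∈ S, (a / |s j|) ^ p ≤ 2 + (a / Δ) ^ p * (π ^ 2 / 3) := by
  classical
  have hs0 : ∀ j ∈ S, s j ≠ 0 := fun j hj h => by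
    have := hs j hj; rw [h, abs_zero] at this; linarith
  have hpos : ∑ j ∈ S with 0 < s j, (a / |s j|) ^ p ≤ 1 + (a / Δ) ^ p * (π ^ 2 / 6) := by
    rw [sum_congr rfl fun j hj => by rw [abs_of_pos (mem_filter.1 hj).2]]
    refine sum_div_pow_le_of_separated _ _ ha hΔ hp (fun j hj => ?_) fun i hi j hj =>
      hsep i (mem_filter.1 hi).1 j (mem_filter.1 hj).1
    simpa [abs_of_pos (mem_filter.1 hj).2] using hs j (mem_filter.1 hj).1
  have hneg : ∑ j ∈ S with ¬0 < s j, (a / |s j|) ^ p ≤ 1 + (a / Δ) ^ p * (π ^ 2 / 6) := by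
    have hlt : ∀ j ∈ S.filter (¬0 < s ·), s j < 0 := fun j hj =>
      lt_of_le_of_ne (not_lt.1 (mem_filter.1 hj).2) (hs0 j (mem_filter.1 hj).1)
    rw [sum_congr rfl fun j hj => by rw [abs_of_neg (hlt j hj)]]
    refine sum_div_pow_le_of_separated _ (fun j => -s j) ha hΔ hp (fun j hj => ?_)
      fun i hi j hj hij => ?_
    · simpa [abs_of_neg (hlt j hj)] using hs j (mem_filter.1 hj).1
    · rw [neg_sub_neg, abs_sub_comm]
      exact hsep i (mem_filter.1 hi).1 j (mem_filter.1 hj).1 hij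
  rw [← sum_filter_add_sum_filter_not S (fun j => 0 < s j)]
  linarith

end Separated

theorem stmt14_general (ℓ r k : ℕ) (hℓ : 4 ≤ ℓ) (hr : 1 ≤ r) (Δ : ℝ) (hΔ : 0 < Δ)
    (f : Fin k → ℝ)
    (hsep : ∀ j j', j ≠ j' → Δ ≤ dw (f j) (f j'))
    (x : ℝ)
    (hfar : ∀ j, 1 / (ℓ : ℝ) ≤ dw x (f j)) :
    (∑ j, (fejer ℓ (x - f j)) ^ r) ≤
      2 / (4 : ℝ) ^ r + Real.pi ^ 2 / ((ℓ : ℝ) ^ (2 * r) * Δ ^ (2 * r)) := by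
  have hℓ0 : (0 : ℝ) < ℓ := by exact_mod_cast (by omega : 0 < ℓ)
  set w : Fin k → ℝ := fun j => x - f j - round (x - f j)
  have hw_far : ∀ j ∈ univ, 1 / (ℓ : ℝ) ≤ |w j| := fun j _ => (hfar j).trans <| by
    simpa [w, sub_eq_add_neg] using dw_le_abs_add_intCast x (f j) (-round (x - f j))
  have hw_sep : ∀ i ∈ univ, ∀ j ∈ univ, i ≠ j → Δ ≤ |w i - w j| := fun i _ j _ hij =>
    (hsep i j hij).trans <| (dw_le_abs_add_intCast _ _ (round (x - f i) - round (x - f j))).trans_eq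
      (by rw [← abs_neg]; congr 1; push_cast; ring)
  have hterm : ∀ j ∈ univ, fejer ℓ (x - f j) ^ r ≤ (1 / 4) ^ r * ((1 / ℓ) / |w j|) ^ (2 * r) :=
    fun j hj => fejer_pow_le r hℓ0 ((by positivity : (0 : ℝ) < 1 / ℓ).trans_le (hw_far j hj))
  calc ∑ j, fejer ℓ (x - f j) ^ r ≤ ∑ j, (1 / 4) ^ r * ((1 / ℓ) / |w j|) ^ (2 * r) :=
        sum_le_sum hterm
    _ = (1 / 4) ^ r * ∑ j, ((1 / ℓ) / |w j|) ^ (2 * r) := (mul_sum ..).symm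
    _ ≤ (1 / 4) ^ r * (2 + ((1 / ℓ) / Δ) ^ (2 * r) * (π ^ 2 / 3)) := by
        gcongr
        exact sum_div_abs_pow_le_of_separated _ _ (by positivity) hΔ (by omega) hw_far hw_sep
    _ = 2 / 4 ^ r + (1 / 4) ^ r / 3 * (π ^ 2 / (ℓ ^ (2 * r) * Δ ^ (2 * r))) := by
        rw [div_eq_mul_one_div (2 : ℝ), ← one_div_pow]; ring
    _ ≤ 2 / 4 ^ r + π ^ 2 / (ℓ ^ (2 * r) * Δ ^ (2 * r)) := by
        have hq : (1 / 4 : ℝ) ^ r / 3 ≤ 1 := by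
          linarith [pow_le_one₀ (by norm_num : (0 : ℝ) ≤ 1 / 4) (by norm_num) (n := r)]
        gcongr
        exact mul_le_of_le_one_left (by positivity) hq

theorem stmt14 (ℓ r k : ℕ) (hℓ : 4 ≤ ℓ) (hr : 1 ≤ r) (Δ : ℝ) (hΔ : 0 < Δ)
    (f : Fin k → ℝ) (hf : ∀ j, f j ∈ Set.Ico (0 : ℝ) 1)
    (hsep : ∀ j j', j ≠ j' → Δ ≤ dw (f j) (f j'))
    (x : ℝ) (hx : x ∈ Set.Ico (0 : ℝ) 1)
    (hfar : ∀ j, 1 / (ℓ : ℝ) ≤ dw x (f j)) :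
    (∑ j, (fejer ℓ (x - f j)) ^ r) ≤
      2 / (4 : ℝ) ^ r + Real.pi ^ 2 / ((ℓ : ℝ) ^ (2 * r) * Δ ^ (2 * r)) :=
  stmt14_general ℓ r k hℓ hr Δ hΔ f hsep x hfar
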